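/- arXiv:1402.1403 — 5 statements merged into one kernel-verified Lean document; each statement's English description precedes it below -/
import Mathlib

section
/- Let F be a field of characteristic different from 2 and let V be an infinite-dimensional F-vector space. Then the center of the exterior algebra Λ(V) is exactly the even part E⁰ of its natural ℤ₂-grading: an element a ∈ Λ(V) commutes with every element of Λ(V) if and only if a ∈ E⁰. -/
/-!
Elements of `E⁰` commute with every `ι v`, and elements of `E¹` anticommute with them. Hence if
`a = a₀ + a₁` is central, then `ι v * a₁ = a₁ * ι v = -(ι v * a₁)`, so `ι v * a₁ = 0` for all `v`
as `2 ≠ 0`. Now `a₁` only involves finitely many vectors; as `V` is infinite-dimensional there is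
a `v` outside their span and a functional `d` with `d v ≠ 0` vanishing on them. Contraction with
`d` is a graded derivation killing `a₁`, so applying it to `ι v * a₁ = 0` gives `d v • a₁ = 0`.
-/

open CliffordAlgebra

namespace CliffordAlgebra

variable {R M : Type*} [CommRing R] [AddCommGroup M] [Module R M] {Q : QuadraticForm R M}

theorem contractLeft_mul (d : Module.Dual R M) (x y : CliffordAlgebra Q) :
    contractLeft d (x * y) = contractLeft d x * y + involute x * contractLeft d y := by
  induction x using CliffordAlgebra.induction generalizing y with
  | algebraMap r =>
    rw [contractLeft_algebraMap_mul, contractLeft_algebraMap, zero_mul, zero_add,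
      involute.commutes]
  | ι m =>
    rw [contractLeft_ι_mul, contractLeft_ι, involute_ι, neg_mul, ← Algebra.smul_def,
      sub_eq_add_neg]
  | mul a b iha ihb =>
    rw [mul_assoc, iha, ihb, iha, map_mul, mul_add, add_mul, mul_assoc, mul_assoc, ← add_assoc,
      mul_assoc (involute a)]
  | add a b iha ihb =>
    rw [add_mul, map_add, map_add, map_add, add_mul, add_mul, iha, ihb]
    abel

theorem contractLeft_eq_zero_of_mem_adjoin {d : Module.Dual R M} {s : Set M}
    (hs : ∀ m ∈ s, d m = 0) {x : CliffordAlgebra Q} (hx : x ∈ Algebra.adjoin R (ι Q '' s)) :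
    contractLeft d x = 0 := by
  induction hx using Algebra.adjoin_induction with
  | mem y hy =>
    obtain ⟨m, hm, rfl⟩ := hy
    rw [contractLeft_ι, hs m hm, map_zero]
  | algebraMap r => exact contractLeft_algebraMap _ _ _
  | add x y _ _ hx hy => rw [map_add, hx, hy, add_zero]
  | mul x y _ _ hx hy => rw [contractLeft_mul, hx, hy, zero_mul, mul_zero, add_zero]

theorem exists_finset_mem_adjoin_ι (x : CliffordAlgebra Q) :
    ∃ s : Finset M, x ∈ Algebra.adjoin R (ι Q '' s) := by
  classical
  have adjoin_union_left (s t : Finset M) :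
      Algebra.adjoin R (ι Q '' s) ≤ Algebra.adjoin R (ι Q '' ↑(s ∪ t)) :=
    Algebra.adjoin_mono (Set.image_mono (by simp))
  have adjoin_union_right (s t : Finset M) :
      Algebra.adjoin R (ι Q '' t) ≤ Algebra.adjoin R (ι Q '' ↑(s ∪ t)) :=
    Algebra.adjoin_mono (Set.image_mono (by simp))
  induction x using CliffordAlgebra.induction with
  | algebraMap r => exact ⟨∅, Subalgebra.algebraMap_mem _ r⟩
  | ι m => exact ⟨{m}, Algebra.subset_adjoin ⟨m, by simp, rfl⟩⟩
  | mul a b ha hb =>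
    obtain ⟨s, hs⟩ := ha
    obtain ⟨t, ht⟩ := hb
    exact ⟨s ∪ t, mul_mem (adjoin_union_left s t hs) (adjoin_union_right s t ht)⟩
  | add a b ha hb =>
    obtain ⟨s, hs⟩ := ha
    obtain ⟨t, ht⟩ := hb
    exact ⟨s ∪ t, add_mem (adjoin_union_left s t hs) (adjoin_union_right s t ht)⟩

end CliffordAlgebra

namespace ExteriorAlgebra

section CommRing

variable {R M : Type*} [CommRing R] [AddCommGroup M] [Module R M]

theorem ι_mul_ι_anticomm (m n : M) : ι R m * ι R n = -(ι R n * ι R m) :=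
  eq_neg_of_add_eq_zero_left (ι_add_mul_swap m n)

theorem ι_mul_ι_mul_comm (m n₁ n₂ : M) :
    ι R m * (ι R n₁ * ι R n₂) = ι R n₁ * ι R n₂ * ι R m := by
  rw [← mul_assoc, ι_mul_ι_anticomm m n₁, neg_mul, mul_assoc, ι_mul_ι_anticomm m n₂, mul_neg,
    neg_neg, mul_assoc]

theorem ι_mul_comm_of_mem_even {x : ExteriorAlgebra R M}
    (hx : x ∈ evenOdd (0 : QuadraticForm R M) 0) (m : M) : ι R m * x = x * ι R m := by
  induction x, hx using even_induction with
  | algebraMap r => exact (Algebra.commutes r _).symm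
  | add x y _ _ hx hy => rw [mul_add, add_mul, hx, hy]
  | ι_mul_ι_mul n₁ n₂ x _ hx =>
    rw [← mul_assoc, ι_mul_ι_mul_comm, mul_assoc, hx, ← mul_assoc]

theorem ι_mul_anticomm_of_mem_odd {x : ExteriorAlgebra R M}
    (hx : x ∈ evenOdd (0 : QuadraticForm R M) 1) (m : M) : ι R m * x = -(x * ι R m) := by
  induction x, hx using odd_induction with
  | ι n => exact ι_mul_ι_anticomm m n
  | add x y _ _ hx hy => rw [mul_add, add_mul, hx, hy, neg_add]
  | ι_mul_ι_mul n₁ n₂ x _ hx =>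
    rw [← mul_assoc, ι_mul_ι_mul_comm, mul_assoc, hx, mul_neg, ← mul_assoc]

theorem commute_of_mem_even {x : ExteriorAlgebra R M}
    (hx : x ∈ evenOdd (0 : QuadraticForm R M) 0) (y : ExteriorAlgebra R M) : Commute x y := by
  induction y using ExteriorAlgebra.induction with
  | algebraMap r => exact Algebra.commute_algebraMap_right r x
  | ι m => exact (ι_mul_comm_of_mem_even hx m).symm
  | mul y z hy hz => exact hy.mul_right hz
  | add y z hy hz => exact hy.add_right hz

end CommRing

section Field

variable {F V : Type*} [Field F] [AddCommGroup V] [Module F V]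

theorem ι_mul_eq_zero_of_mem_odd_of_commute (hchar : ringChar F ≠ 2) {x : ExteriorAlgebra F V}
    (hx : x ∈ evenOdd (0 : QuadraticForm F V) 1) {v : V} (hxv : Commute x (ι F v)) :
    ι F v * x = 0 := by
  have h : ι F v * x + ι F v * x = 0 :=
    eq_neg_iff_add_eq_zero.mp <| (ι_mul_anticomm_of_mem_odd hx v).trans (by rw [hxv.eq])
  rw [← two_smul F, smul_eq_zero] at h
  exact h.resolve_left (Ring.two_ne_zero hchar)

theorem eq_zero_of_forall_ι_mul_eq_zero (hV : ¬ FiniteDimensional F V)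
    {x : ExteriorAlgebra F V} (hx : ∀ v, ι F v * x = 0) : x = 0 := by
  obtain ⟨s, hs⟩ := exists_finset_mem_adjoin_ι x
  obtain ⟨v, hv⟩ : ∃ v, v ∉ Submodule.span F (s : Set V) := by
    by_contra! h
    exact hV ⟨⟨s, Submodule.eq_top_iff'.mpr h⟩⟩
  obtain ⟨d, hdv, hds⟩ := Submodule.exists_dual_map_eq_bot_of_notMem hv inferInstance
  have hdx : contractLeft d x = 0 := contractLeft_eq_zero_of_mem_adjoin
    (fun w hw => LinearMap.le_ker_iff_map.mpr hds (Submodule.subset_span hw)) hs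
  have h := contractLeft_ι_mul (Q := 0) d v x
  rw [show CliffordAlgebra.ι 0 v * x = 0 from hx v, map_zero, hdx, mul_zero, sub_zero, eq_comm, smul_eq_zero] at h
  exact h.resolve_left hdv

end Field

end ExteriorAlgebra

open ExteriorAlgebra

/-- If `V` is an infinite-dimensional vector space over a field `F` of characteristic ≠ 2,
then the center of the Grassmann algebra Λ(V) is exactly the even part `E⁰` of its natural
ℤ₂-grading. -/
theorem grassmann_center_eq_even_part
    (F : Type*) [Field F] (hchar : ringChar F ≠ 2)
    (V : Type*) [AddCommGroup V] [Module F V]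
    (hV : ¬ FiniteDimensional F V)
    (a : ExteriorAlgebra F V) :
    (∀ b : ExteriorAlgebra F V, a * b = b * a) ↔
      a ∈ CliffordAlgebra.evenOdd (0 : QuadraticForm F V) 0 := by
  refine ⟨fun ha => ?_, fun ha b => (commute_of_mem_even ha b).eq⟩
  obtain ⟨a₀, h₀, a₁, h₁, rfl⟩ := Submodule.mem_sup.mp <|
    (evenOdd_isCompl (0 : QuadraticForm F V)).sup_eq_top ▸ Submodule.mem_top (x := a)
  have ha₁ (v : V) : Commute a₁ (ι F v) := by
    have h := ha (ι F v)
    rw [add_mul, mul_add, (commute_of_mem_even h₀ _).eq] at h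
    exact add_left_cancel h
  rwa [eq_zero_of_forall_ι_mul_eq_zero hV
    fun v => ι_mul_eq_zero_of_mem_odd_of_commute hchar h₁ (ha₁ v), add_zero]
end

section
/- (Regev) Let F be a field of odd prime characteristic p and V an F-vector space. Then every element x of the augmentation ideal E* of the exterior algebra Λ(V) (the two-sided ideal generated by the image of ι) satisfies x^p = 0. In other words, x^p is a polynomial identity for the Grassmann algebra without unit. -/
/-!
Split `x` into its even and odd parts, `x = a + b`. The even part `a` is central, so in
characteristic `p` we get `x ^ p = a ^ p + b ^ p`. The odd part anticommutes with itself, so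
`b * b = -(b * b)`, and `b * b = 0` because `2` is invertible. The augmentation ideal is spanned by
the elements `ι v * z`, and the even part of `ι v * z` is `ι v * z'` with `z'` the odd part of `z`.
Such elements are central and square to zero, and the Frobenius map is additive on central
elements, so `a ^ p = 0`.
-/

theorem pow_eq_zero_of_mem_span_of_subset_center {R A : Type*} [CommSemiring R] [Semiring A]
    [Algebra R A] (p : ℕ) [Fact p.Prime] [CharP A p] {S : Set A} (hcen : S ⊆ Set.center A)
    (hS : ∀ s ∈ S, s ^ p = 0) {x : A} (hx : x ∈ Submodule.span R S) : x ^ p = 0 := by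
  have hspan : (Submodule.span R S : Set A) ⊆ Set.center A :=
    (Submodule.span_le (p := (Subalgebra.center R A).toSubmodule)).mpr hcen
  induction hx using Submodule.span_induction with
  | mem s hs => exact hS s hs
  | zero => exact zero_pow (Fact.out : p.Prime).ne_zero
  | add u w hu _ hu' hw' =>
    have huw : Commute u w := (Semigroup.mem_center_iff.mp (hspan hu) w).symm
    rw [add_pow_char_of_commute _ huw, hu', hw', add_zero]
  | smul c u _ hu => rw [smul_pow, hu, smul_zero]

namespace CliffordAlgebra

variable {R M : Type*} [CommRing R] [AddCommGroup M] [Module R M] {Q : QuadraticForm R M}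
  [Invertible (2 : R)]

def evenPart : CliffordAlgebra Q →ₗ[R] CliffordAlgebra Q :=
  (⅟2 : R) • (LinearMap.id + involute.toLinearMap)

def oddPart : CliffordAlgebra Q →ₗ[R] CliffordAlgebra Q :=
  (⅟2 : R) • (LinearMap.id - involute.toLinearMap)

theorem evenPart_apply (x : CliffordAlgebra Q) : evenPart x = (⅟2 : R) • (x + involute x) := rfl

theorem oddPart_apply (x : CliffordAlgebra Q) : oddPart x = (⅟2 : R) • (x - involute x) := rfl

theorem evenPart_add_oddPart (x : CliffordAlgebra Q) : evenPart x + oddPart x = x := by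
  rw [evenPart_apply, oddPart_apply, ← smul_add, add_add_sub_cancel, ← two_smul R x, smul_smul,
    invOf_mul_self, one_smul]

theorem involute_evenPart (x : CliffordAlgebra Q) : involute (evenPart x) = evenPart x := by
  rw [evenPart_apply, map_smul, map_add, involute_involute, add_comm]

theorem involute_oddPart (x : CliffordAlgebra Q) : involute (oddPart x) = -oddPart x := by
  rw [oddPart_apply, map_smul, map_sub, involute_involute, ← smul_neg, neg_sub]

theorem evenPart_ι_mul (v : M) (z : CliffordAlgebra Q) :
    evenPart (ι Q v * z) = ι Q v * oddPart z := by
  rw [evenPart_apply, oddPart_apply, map_mul, involute_ι, neg_mul, ← sub_eq_add_neg, ← mul_sub,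
    mul_smul_comm]

end CliffordAlgebra

namespace ExteriorAlgebra

open CliffordAlgebra

variable {R M : Type*} [CommRing R] [AddCommGroup M] [Module R M]

theorem ι_mul_eq_involute_mul (v : M) (z : ExteriorAlgebra R M) :
    ι R v * z = involute z * ι R v := by
  induction z using CliffordAlgebra.induction with
  | algebraMap r => rw [AlgHom.commutes]; exact (Algebra.commutes r _).symm
  | ι w =>
    rw [involute_ι, neg_mul, eq_neg_iff_add_eq_zero]
    exact ι_add_mul_swap v w
  | mul a b ha hb => rw [← mul_assoc, ha, mul_assoc, hb, ← mul_assoc, ← map_mul]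
  | add a b ha hb => rw [mul_add, ha, hb, ← add_mul, ← map_add]

theorem commute_of_involute_eq {a : ExteriorAlgebra R M} (ha : involute a = a)
    (z : ExteriorAlgebra R M) : Commute a z := by
  induction z using CliffordAlgebra.induction with
  | algebraMap r => exact (Algebra.commutes r a).symm
  | ι w => rw [Commute, SemiconjBy, ι_mul_eq_involute_mul, ha]
  | mul x y hx hy => exact hx.mul_right hy
  | add x y hx hy => exact hx.add_right hy

theorem mul_eq_involute_mul_of_involute_eq_neg {b : ExteriorAlgebra R M}
    (hb : involute b = -b) (z : ExteriorAlgebra R M) : b * z = involute z * b := by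
  induction z using CliffordAlgebra.induction with
  | algebraMap r => rw [AlgHom.commutes]; exact (Algebra.commutes r b).symm
  | ι w => rw [involute_ι, neg_mul, ι_mul_eq_involute_mul, hb, neg_mul, neg_neg]
  | mul x y hx hy => rw [← mul_assoc, hx, mul_assoc, hy, ← mul_assoc, ← map_mul]
  | add x y hx hy => rw [mul_add, hx, hy, ← add_mul, ← map_add]

theorem ι_mul_mul_self (v : M) (z : ExteriorAlgebra R M) : ι R v * z * (ι R v * z) = 0 := by
  have hz : z * ι R v = ι R v * involute z := by
    rw [ι_mul_eq_involute_mul, involute_involute]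
  calc ι R v * z * (ι R v * z) = ι R v * (z * ι R v) * z := by noncomm_ring
    _ = ι R v * ι R v * (involute z * z) := by rw [hz]; noncomm_ring
    _ = 0 := by rw [ι_sq_zero, zero_mul]

theorem mul_self_eq_zero_of_involute_eq_neg [Invertible (2 : R)] {b : ExteriorAlgebra R M}
    (hb : involute b = -b) : b * b = 0 := by
  have hanti : b * b = -(b * b) :=
    calc b * b = involute b * b := mul_eq_involute_mul_of_involute_eq_neg hb b
      _ = -(b * b) := by rw [hb, neg_mul]
  have htwo : (2 : R) • (b * b) = 0 := by
    rw [two_smul]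
    nth_rewrite 2 [hanti]
    exact add_neg_cancel _
  exact ((isUnit_of_invertible (2 : R)).smul_eq_zero).mp htwo

theorem mem_span_ι_mul_of_mem_span_range_ι {x : ExteriorAlgebra R M}
    (hx : x ∈ TwoSidedIdeal.span (Set.range (ι R))) :
    x ∈ Submodule.span R (Set.range fun vz : M × ExteriorAlgebra R M => ι R vz.1 * vz.2) := by
  set T := Set.range fun vz : M × ExteriorAlgebra R M => ι R vz.1 * vz.2
  have hstable : ∀ f : ExteriorAlgebra R M →ₗ[R] ExteriorAlgebra R M,
      (∀ t ∈ T, f t ∈ Submodule.span R T) → ∀ y ∈ Submodule.span R T, f y ∈ Submodule.span R T :=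
    fun f hf _ hy => (Submodule.span_le (p := (Submodule.span R T).comap f)).mpr hf hy
  induction hx using TwoSidedIdeal.span_induction with
  | mem _ h =>
    obtain ⟨v, rfl⟩ := h
    exact Submodule.subset_span ⟨(v, 1), mul_one _⟩
  | zero => exact Submodule.zero_mem _
  | add _ _ _ _ hy hz => exact Submodule.add_mem _ hy hz
  | neg _ _ hy => exact Submodule.neg_mem _ hy
  | left_absorb a y _ hy =>
    refine hstable (LinearMap.mulLeft R a) ?_ y hy
    rintro _ ⟨⟨v, z⟩, rfl⟩
    refine Submodule.subset_span ⟨(v, involute a * z), ?_⟩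
    change ι R v * (involute a * z) = a * (ι R v * z)
    rw [← mul_assoc, ι_mul_eq_involute_mul v (involute a), involute_involute, mul_assoc]
  | right_absorb b y _ hy =>
    refine hstable (LinearMap.mulRight R b) ?_ y hy
    rintro _ ⟨⟨v, z⟩, rfl⟩
    exact Submodule.subset_span ⟨(v, z * b), (mul_assoc _ _ _).symm⟩

theorem evenPart_pow_eq_zero_of_mem_span_range_ι [Invertible (2 : R)] (p : ℕ) [Fact p.Prime]
    [CharP (ExteriorAlgebra R M) p] {x : ExteriorAlgebra R M}
    (hx : x ∈ TwoSidedIdeal.span (Set.range (ι R))) : evenPart x ^ p = 0 := by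
  refine pow_eq_zero_of_mem_span_of_subset_center (R := R) p ?_ ?_
    (Submodule.apply_mem_span_image_of_mem_span evenPart (mem_span_ι_mul_of_mem_span_range_ι hx))
  · rintro _ ⟨_, ⟨⟨v, z⟩, rfl⟩, rfl⟩
    exact Semigroup.mem_center_iff.mpr fun g => (commute_of_involute_eq (involute_evenPart _) g).symm
  · rintro _ ⟨_, ⟨⟨v, z⟩, rfl⟩, rfl⟩
    refine pow_eq_zero_of_le (Fact.out : p.Prime).two_le ?_
    rw [sq, evenPart_ι_mul]
    exact ι_mul_mul_self v _

end ExteriorAlgebra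

/-- (Regev) Over a field of odd prime characteristic `p`, every element of the
augmentation ideal of the Grassmann algebra (the two-sided ideal generated by the image
of `ι`, i.e. the Grassmann algebra without unit) satisfies `x ^ p = 0`. -/
theorem grassmann_augmentation_ideal_pow_char
    (F : Type*) [Field F] (p : ℕ) [Fact p.Prime] (hp : p ≠ 2) [CharP F p]
    (V : Type*) [AddCommGroup V] [Module F V]
    (x : ExteriorAlgebra F V)
    (hx : x ∈ TwoSidedIdeal.span (Set.range (ExteriorAlgebra.ι F (M := V)))) :
    x ^ p = 0 := by
  have : CharP (ExteriorAlgebra F V) p :=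
    charP_of_injective_algebraMap (ExteriorAlgebra.algebraMap_leftInverse V).injective p
  have : Invertible (2 : F) := invertibleOfNonzero (Ring.two_ne_zero (by rwa [ringChar.eq F p]))
  have hodd : (CliffordAlgebra.oddPart x) ^ p = 0 :=
    pow_eq_zero_of_le (Fact.out : p.Prime).two_le ((sq _).trans
      (ExteriorAlgebra.mul_self_eq_zero_of_involute_eq_neg (CliffordAlgebra.involute_oddPart x)))
  have heven_central :=
    ExteriorAlgebra.commute_of_involute_eq (CliffordAlgebra.involute_evenPart x)
  rw [← CliffordAlgebra.evenPart_add_oddPart x, add_pow_char_of_commute _ (heven_central _),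
    ExteriorAlgebra.evenPart_pow_eq_zero_of_mem_span_range_ι p hx, hodd, add_zero]
end

section
/- Let F be a field of odd prime characteristic p, V an F-vector space, n ≥ 1, and v : Fin (2n) → V any family of vectors; let a = ι(v₀)ι(v₁)⋯ι(v_{2n−1}) ∈ Λ(V) and f ∈ F. If α, β, k ∈ ℕ satisfy α = β + p·k (so that α ≡ β mod p), then (f·1 + a)^α = f^{p·k} · (f·1 + a)^β in Λ(V). -/
/-!
Since `a` is a nonempty product of generators, `a * a` contains a repeated generator and vanishes.
As `f·1` is central, the Frobenius gives `(f·1 + a) ^ p = f ^ p·1 + a ^ p = f ^ p·1`, so raising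
`f·1 + a` to `p * k` more powers only multiplies by `f ^ (p * k)`.
-/

namespace ExteriorAlgebra

variable {R M : Type*} [CommRing R] [AddCommGroup M] [Module R M]

lemma ιMulti_mul_self_eq_zero {m : ℕ} (hm : 0 < m) (v : Fin m → M) :
    ιMulti R m v * ιMulti R m v = 0 := by
  rw [ιMulti_mul_ιMulti]
  refine ιMulti_eq_zero_of_not_inj fun hinj => ?_
  have hne : Fin.castAdd m ⟨0, hm⟩ ≠ Fin.natAdd m ⟨0, hm⟩ := by
    simpa [Fin.ext_iff] using hm.ne
  exact hne (hinj (by rw [Fin.append_left, Fin.append_right]))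

end ExteriorAlgebra

section CharP

variable {R : Type*} [Semiring R] {p : ℕ} [Fact p.Prime] [CharP R p] {x a : R}

lemma Commute.add_pow_char_of_mul_self_eq_zero (h : Commute x a) (ha : a * a = 0) :
    (x + a) ^ p = x ^ p := by
  have hap : a ^ p = 0 := pow_eq_zero_of_le (Fact.out : p.Prime).two_le (by rw [sq, ha])
  rw [add_pow_char_of_commute p h, hap, add_zero]

lemma Commute.add_pow_add_char_mul_of_mul_self_eq_zero (h : Commute x a) (ha : a * a = 0)
    (β k : ℕ) : (x + a) ^ (β + p * k) = x ^ (p * k) * (x + a) ^ β := by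
  rw [pow_add, pow_mul, h.add_pow_char_of_mul_self_eq_zero ha, ← pow_mul]
  exact (((Commute.refl x).add_right h).pow_pow (p * k) β).symm.eq

end CharP

theorem grassmann_scalar_plus_even_pow_congr_mod_char_general
    (F : Type*) [Field F] (p : ℕ) [Fact p.Prime] [CharP F p]
    (V : Type*) [AddCommGroup V] [Module F V]
    (n : ℕ) (hn : 1 ≤ n) (v : Fin (2 * n) → V) (f : F)
    (a : ExteriorAlgebra F V)
    (ha : a = (List.ofFn fun i => ExteriorAlgebra.ι F (v i)).prod)
    (α β k : ℕ) (hαβ : α = β + p * k) :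
    (algebraMap F (ExteriorAlgebra F V) f + a) ^ α
      = algebraMap F (ExteriorAlgebra F V) (f ^ (p * k))
          * (algebraMap F (ExteriorAlgebra F V) f + a) ^ β := by
  have : CharP (ExteriorAlgebra F V) p :=
    charP_of_injective_algebraMap (ExteriorAlgebra.algebraMap_leftInverse V).injective p
  have hsq : a * a = 0 := by
    rw [ha, ← ExteriorAlgebra.ιMulti_apply]
    exact ExteriorAlgebra.ιMulti_mul_self_eq_zero (by omega) v
  rw [hαβ, map_pow]
  exact (Algebra.commute_algebraMap_left f a).add_pow_add_char_mul_of_mul_self_eq_zero hsq β k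

/-- Over a field of odd prime characteristic `p`, if `a` is a product of an even
(positive) number of Grassmann generators, `f` is a scalar, and `α = β + p·k`, then
`(f·1 + a) ^ α = f^{p·k} · (f·1 + a) ^ β` in Λ(V). -/
theorem grassmann_scalar_plus_even_pow_congr_mod_char
    (F : Type*) [Field F] (p : ℕ) [Fact p.Prime] (hp : p ≠ 2) [CharP F p]
    (V : Type*) [AddCommGroup V] [Module F V]
    (n : ℕ) (hn : 1 ≤ n) (v : Fin (2 * n) → V) (f : F)
    (a : ExteriorAlgebra F V)
    (ha : a = (List.ofFn fun i => ExteriorAlgebra.ι F (v i)).prod)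
    (α β k : ℕ) (hαβ : α = β + p * k) :
    (algebraMap F (ExteriorAlgebra F V) f + a) ^ α
      = algebraMap F (ExteriorAlgebra F V) (f ^ (p * k))
          * (algebraMap F (ExteriorAlgebra F V) f + a) ^ β :=
  grassmann_scalar_plus_even_pow_congr_mod_char_general F p V n hn v f a ha α β k hαβ
end

section
/- Let n, k ∈ ℕ and j ≥ 1. The number of monomials of total degree n in k commuting variables in which each variable occurs with degree strictly less than j, i.e. the cardinality of { f : Fin k → ℕ | (∀ i, f i < j) and Σ_i f i = n }, equals κ(n, j, k) = Σ_{r + s·j = n, r,s ≥ 0} (−1)^s · C(k + r − 1, r) · C(k, s), where C denotes the binomial coefficient (the identity is an equality of integers). -/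
/-! The count is the coefficient of `X ^ n` in `(1 + X + ⋯ + X ^ (j - 1)) ^ k`, which equals
`(1 - X ^ j) ^ k * (1 - X)⁻ᵏ`. Expanding `(1 - X ^ j) ^ k` by the binomial theorem and using
`(1 - X)⁻ᵏ = ∑ C(k + r - 1, r) X ^ r`, the coefficient is `κ(n, j, k)`. -/

open PowerSeries Finset

theorem PowerSeries.coeff_prod_sum_X_pow {R ι : Type*} [CommSemiring R] [Fintype ι]
    [DecidableEq ι] (t : ι → Finset ℕ) (n : ℕ) :
    coeff n (∏ i, ∑ m ∈ t i, (X : R⟦X⟧) ^ m) = #{f ∈ Fintype.piFinset t | ∑ i, f i = n} := by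
  simp only [prod_univ_sum, prod_pow_eq_pow_sum, map_sum, coeff_X_pow, sum_boole, eq_comm]

theorem PowerSeries.coeff_invOneSubPow_val {R : Type*} [CommRing R] (k n : ℕ) :
    coeff n (invOneSubPow R k).val = (k + n - 1).choose n := by
  cases k with
  | zero => cases n <;> simp [invOneSubPow_zero, coeff_one]
  | succ k =>
    rw [invOneSubPow_val_succ_eq_mk_add_choose, coeff_mk, Nat.add_right_comm, Nat.add_sub_cancel,
      Nat.choose_symm_add]

theorem PowerSeries.geom_sum_X_pow_pow_eq {R : Type*} [CommRing R] (j k : ℕ) :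
    (∑ i ∈ range j, (X : R⟦X⟧) ^ i) ^ k = (1 - X ^ j) ^ k * (invOneSubPow R k).val := by
  have h : (1 - X : R⟦X⟧) ^ k * (invOneSubPow R k).val = 1 := by
    rw [← invOneSubPow_inv_eq_one_sub_pow]
    exact (invOneSubPow R k).inv_val
  rw [← geom_sum_mul_neg, mul_pow, mul_assoc, h, mul_one]

theorem PowerSeries.coeff_one_sub_X_pow_pow_mul {R : Type*} [CommRing R] (j k n : ℕ)
    (φ : R⟦X⟧) :
    coeff n ((1 - X ^ j) ^ k * φ) = ∑ s ∈ range (k + 1),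
      if s * j ≤ n then (-1) ^ s * k.choose s * coeff (n - s * j) φ else 0 := by
  rw [sub_eq_neg_add, add_pow, sum_mul, map_sum]
  refine sum_congr rfl fun s _ => ?_
  have : (-X ^ j) ^ s * 1 ^ (k - s) * (k.choose s : R⟦X⟧) * φ
      = X ^ (s * j) * (C ((-1) ^ s * k.choose s : R) * φ) := by
    rw [neg_pow, ← pow_mul, map_mul, map_pow, map_neg, map_one, map_natCast]
    ring
  rw [this, coeff_X_pow_mul', coeff_C_mul]

theorem Finset.sum_filter_add_mul_eq {M : Type*} [AddCommMonoid M] (g : ℕ → ℕ → M) (j n : ℕ) :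
    ∑ p ∈ (range (n + 1) ×ˢ range (n + 1)).filter (fun p => p.1 + p.2 * j = n), g p.1 p.2
      = ∑ s ∈ range (n + 1), if s * j ≤ n then g (n - s * j) s else 0 := by
  rw [sum_filter, sum_product_right]
  refine sum_congr rfl fun s _ => ?_
  dsimp only
  split_ifs with h
  · have : ∀ r, r + s * j = n ↔ r = n - s * j := fun r => by omega
    simp only [this, sum_ite_eq', mem_range]
    rw [if_pos (by omega)]
  · exact sum_eq_zero fun r _ => if_neg (by omega)

/-- The number of monomials of total degree `n` in `k` commuting variables in which each
variable occurs with degree `< j` equals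
`κ(n,j,k) = Σ_{r+s·j=n} (−1)^s C(k+r−1, r) C(k, s)`. -/
theorem count_bounded_degree_monomials
    (n k j : ℕ) (hj : 1 ≤ j) :
    (((Fintype.piFinset fun _ : Fin k => Finset.range j).filter
        fun f => ∑ i, f i = n).card : ℤ)
      = ∑ p ∈ (Finset.range (n + 1) ×ˢ Finset.range (n + 1)).filter
            (fun p => p.1 + p.2 * j = n),
          (-1 : ℤ) ^ p.2 * (k + p.1 - 1).choose p.1 * k.choose p.2 := by
  rw [← coeff_prod_sum_X_pow, prod_const, card_univ, Fintype.card_fin, geom_sum_X_pow_pow_eq,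
    coeff_one_sub_X_pow_pow_mul,
    sum_filter_add_mul_eq (fun r s => (-1 : ℤ) ^ s * (k + r - 1).choose r * k.choose s)]
  simp only [coeff_invOneSubPow_val, mul_right_comm _ (k.choose _ : ℤ)]
  -- Only `s ≤ min k n` contributes: beyond `k` the binomial vanishes, beyond `n` `s * j ≤ n` fails.
  have hvanish : ∀ s ≥ min k n + 1, (if s * j ≤ n then
      (-1 : ℤ) ^ s * ((k + (n - s * j) - 1).choose (n - s * j) : ℤ) * k.choose s else 0) = 0 := by
    intro s hs
    rcases min_lt_iff.mp (Nat.lt_of_succ_le hs) with hk | hn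
    · rw [Nat.choose_eq_zero_of_lt hk, Nat.cast_zero, mul_zero, ite_self]
    · exact if_neg (by nlinarith)
  rw [eventually_constant_sum hvanish (n := k + 1) (by omega),
    eventually_constant_sum hvanish (n := n + 1) (by omega)]
end

section
/- Let F be a field, V an F-vector space, k an even natural number, and W a finite-dimensional subspace of V with dim_F W = k. Let I be the two-sided ideal of Λ(V) generated by ι(W). Then for any w₁, …, w_{k+1} ∈ I and any element x ∈ Λ(V), [w₁, w₂]·[w₃, w₄]⋯[w_{k−1}, w_k]·[w_{k+1}, x] = 0. (This realises the graded identity [y₁,y₂]⋯[y_{k−1},y_k][y_{k+1},x] of the Grassmann algebra E_k for even k, since the even component of E_k decomposes as a central element plus an element of I.) -/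
/-!
Since `a * ι v = ι v * involute a`, the two-sided ideal generated by `ι(W)` is contained in
`ι(W) * Λ(V)`, hence its `(k+1)`-st power in `ι(W)^(k+1) * Λ(V)`, which is zero because
`k+1` vectors of the `k`-dimensional space `W` are linearly dependent. Each `[w₂ᵢ₋₁, w₂ᵢ]` lies
in the square of the ideal and `[w_{k+1}, x]` in the ideal, so the product lies in its
`(k+1)`-st power.
-/

namespace Submodule

variable {R A : Type*} [CommRing R] [Ring A] [Algebra R A] {S : Submodule R A}

theorem mul_top_mul_top_le : S * ⊤ * ⊤ ≤ S * ⊤ := by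
  rw [mul_assoc]
  gcongr
  exact le_top

theorem mul_mem_mul_top_of_mem_left {s : A} (hs : s ∈ S * ⊤) (b : A) : s * b ∈ S * ⊤ :=
  mul_top_mul_top_le (mul_mem_mul hs mem_top)

theorem mul_mem_mul_top_of_mem_right (h : ⊤ * S ≤ S * ⊤) (a : A) {s : A} (hs : s ∈ S * ⊤) :
    a * s ∈ S * ⊤ := by
  have has : a * s ∈ ⊤ * S * ⊤ := by
    rw [mul_assoc]
    exact mul_mem_mul mem_top hs
  exact mul_top_mul_top_le (mul_le_mul_left h ⊤ has)

theorem pow_mul_top_le_of_top_mul_le (h : ⊤ * S ≤ S * ⊤) : ∀ n : ℕ, (S * ⊤) ^ n ≤ S ^ n * ⊤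
  | 0 => by simp
  | n + 1 => calc
      (S * ⊤) ^ (n + 1) = (S * ⊤) ^ n * (S * ⊤) := pow_succ _ _
      _ ≤ S ^ n * ⊤ * (S * ⊤) := by gcongr; exact pow_mul_top_le_of_top_mul_le h n
      _ = S ^ n * (⊤ * S) * ⊤ := by simp only [mul_assoc]
      _ ≤ S ^ n * (S * ⊤) * ⊤ := by gcongr
      _ = S ^ (n + 1) * ⊤ * ⊤ := by rw [pow_succ]; simp only [mul_assoc]
      _ ≤ S ^ (n + 1) * ⊤ := mul_top_mul_top_le

theorem mem_mul_top_of_mem_twoSidedIdeal_span (h : ⊤ * S ≤ S * ⊤) {x : A}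
    (hx : x ∈ TwoSidedIdeal.span (S : Set A)) : x ∈ S * ⊤ := by
  induction hx using TwoSidedIdeal.span_induction with
  | mem x hx => simpa using mul_mem_mul hx (mem_top (x := (1 : A)))
  | zero => exact zero_mem _
  | add x y _ _ hx hy => exact add_mem hx hy
  | neg x _ hx => exact neg_mem hx
  | left_absorb a x _ hx => exact mul_mem_mul_top_of_mem_right h a hx
  | right_absorb b x _ hx => exact mul_mem_mul_top_of_mem_left hx b

theorem list_prod_ofFn_mem_pow {P : Submodule R A} {n : ℕ} :
    ∀ {m : ℕ} (f : Fin m → A), (∀ i, f i ∈ P ^ n) → (List.ofFn f).prod ∈ P ^ (n * m)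
  | 0, _, _ => by simpa using one_le.mp (le_refl (1 : Submodule R A))
  | m + 1, f, hf => by
    rw [List.ofFn_succ, List.prod_cons, mul_add_one, add_comm, pow_add]
    exact mul_mem_mul (hf 0) (list_prod_ofFn_mem_pow _ fun i => hf i.succ)

end Submodule

namespace ExteriorAlgebra

section CommRing

variable {R M : Type*} [CommRing R] [AddCommGroup M] [Module R M]

theorem mul_ι_eq_ι_mul_involute (a : ExteriorAlgebra R M) (v : M) :
    a * ι R v = ι R v * CliffordAlgebra.involute a := by
  induction a using ExteriorAlgebra.induction with
  | algebraMap r => rw [AlgHom.commutes]; exact Algebra.commutes r _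
  | ι u =>
    rw [CliffordAlgebra.involute_ι, mul_neg]
    exact eq_neg_of_add_eq_zero_left (ι_add_mul_swap u v)
  | mul a b ha hb => rw [map_mul, mul_assoc, hb, ← mul_assoc, ha, mul_assoc]
  | add a b ha hb => rw [map_add, add_mul, ha, hb, mul_add]

theorem top_mul_map_ι_le (N : Submodule R M) : ⊤ * N.map (ι R) ≤ N.map (ι R) * ⊤ := by
  rw [Submodule.mul_le]
  rintro a - _ ⟨v, hv, rfl⟩
  rw [mul_ι_eq_ι_mul_involute]
  exact Submodule.mul_mem_mul (Submodule.mem_map_of_mem hv) Submodule.mem_top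

theorem mem_map_ι_mul_top_of_mem_span (N : Submodule R M) {x : ExteriorAlgebra R M}
    (hx : x ∈ TwoSidedIdeal.span (ι R '' N)) : x ∈ N.map (ι R) * ⊤ := by
  rw [← Submodule.map_coe] at hx
  exact Submodule.mem_mul_top_of_mem_twoSidedIdeal_span (top_mul_map_ι_le N) hx

end CommRing

variable {F V : Type*} [Field F] [AddCommGroup V] [Module F V]

theorem ιMulti_eq_zero_of_finrank_lt (N : Submodule F V) [FiniteDimensional F N] {n : ℕ}
    (hn : Module.finrank F N < n) (v : Fin n → N) : ιMulti F n (N.subtype ∘ v) = 0 := by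
  refine AlternatingMap.map_linearDependent _ _ fun hv => ?_
  have := (hv.of_comp N.subtype).fintype_card_le_finrank
  rw [Fintype.card_fin] at this
  omega

theorem map_ι_pow_finrank_succ (N : Submodule F V) [FiniteDimensional F N] :
    N.map (ι F) ^ (Module.finrank F N + 1) = ⊥ := by
  rw [← Submodule.span_eq N, ← Submodule.span_image, Submodule.span_pow, Submodule.span_eq,
    Submodule.span_eq_bot]
  intro x hx
  obtain ⟨f, rfl⟩ := Set.mem_pow.mp hx
  choose v hvN hvf using fun i => (f i).2
  have := ιMulti_eq_zero_of_finrank_lt N (Nat.lt_succ_self _) fun i => ⟨v i, hvN i⟩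
  simpa only [ιMulti_apply, Function.comp_apply, N.subtype_apply, hvf] using this

theorem map_ι_mul_top_pow_finrank_succ (N : Submodule F V) [FiniteDimensional F N] :
    (N.map (ι F) * ⊤) ^ (Module.finrank F N + 1) = ⊥ := by
  refine eq_bot_iff.mpr ((Submodule.pow_mul_top_le_of_top_mul_le (top_mul_map_ι_le N) _).trans ?_)
  rw [map_ι_pow_finrank_succ, Submodule.bot_mul]

end ExteriorAlgebra

open ExteriorAlgebra

/-- Let `k` be even, `W` a `k`-dimensional subspace of `V`, and `I` the two-sided ideal of
Λ(V) generated by `ι(W)`. For any `w₁, …, w_{k+1} ∈ I` and any `x ∈ Λ(V)` the product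
`[w₁,w₂]⋯[w_{k−1},w_k]·[w_{k+1},x]` vanishes (the graded identity of `E_k` for even `k`). -/
theorem grassmann_commutator_product_vanishes_even
    (F : Type*) [Field F] (V : Type*) [AddCommGroup V] [Module F V]
    (k : ℕ) (hk : Even k) (W : Submodule F V) [FiniteDimensional F W]
    (hW : Module.finrank F W = k)
    (I : TwoSidedIdeal (ExteriorAlgebra F V))
    (hI : I = TwoSidedIdeal.span (ExteriorAlgebra.ι F '' (W : Set V)))
    (w : Fin (k + 1) → ExteriorAlgebra F V) (hw : ∀ i, w i ∈ I)
    (x : ExteriorAlgebra F V) :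
    (List.ofFn fun i : Fin (k / 2) =>
        w ⟨2 * (i : ℕ), by have := i.2; rcases hk with ⟨m, hm⟩; omega⟩
            * w ⟨2 * (i : ℕ) + 1, by have := i.2; rcases hk with ⟨m, hm⟩; omega⟩
          - w ⟨2 * (i : ℕ) + 1, by have := i.2; rcases hk with ⟨m, hm⟩; omega⟩
            * w ⟨2 * (i : ℕ), by have := i.2; rcases hk with ⟨m, hm⟩; omega⟩).prod
        * (w ⟨k, by omega⟩ * x - x * w ⟨k, by omega⟩)
      = 0 := by
  subst hI
  set P := W.map (ι F) * ⊤
  have hwP (i) : w i ∈ P := mem_map_ι_mul_top_of_mem_span W (hw i)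
  have hcomm (i j) : w i * w j - w j * w i ∈ P ^ 2 := by
    rw [pow_two]
    exact sub_mem (Submodule.mul_mem_mul (hwP i) (hwP j)) (Submodule.mul_mem_mul (hwP j) (hwP i))
  have hlast : w ⟨k, by omega⟩ * x - x * w ⟨k, by omega⟩ ∈ P :=
    sub_mem (Submodule.mul_mem_mul_top_of_mem_left (hwP _) x)
      (Submodule.mul_mem_mul_top_of_mem_right (top_mul_map_ι_le W) x (hwP _))
  have hdeg : Module.finrank F W + 1 = 2 * (k / 2) + 1 := by
    obtain ⟨m, rfl⟩ := hk
    omega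
  rw [← Submodule.mem_bot F, ← map_ι_mul_top_pow_finrank_succ W, hdeg, pow_succ]
  exact Submodule.mul_mem_mul (Submodule.list_prod_ofFn_mem_pow _ fun i => hcomm _ _) hlast
end
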